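/- Let n be a positive even integer, write n = 2^k·s with k ≥ 1 and s odd, and set α = 2^{2^{1−k}}. Let a be an integer with 1 ≤ a < n/2 and define c_a = 2·cos(aπ/n) if n/gcd(a,n) is not a power of 2, and c_a = 2^{1−2^{1−j}}·cos(aπ/n) if n/gcd(a,n) = 2^j. Then c_a is an algebraic integer coprime to α, i.e., there exist algebraic integers u₁, u₂ with u₁·c_a + u₂·α = 1. The same holds with cos replaced by sin (define s_a analogously using the condition on n/gcd(n/2−a, n)); in fact s_a = c_{n/2−a}. -/

import Mathlib

attribute [local instance] Classical.propDecidable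

/-- `α = 2^{2^{1−k}}`, viewed as a complex number. -/
noncomputable def alphaC (k : ℕ) : ℂ :=
  Complex.ofReal ((2 : ℝ) ^ ((2 : ℝ) ^ ((1 : ℝ) - (k : ℝ))))

/-- Two algebraic integers `w` and `v` are coprime iff there are algebraic integers
`u₁, u₂` with `u₁·w + u₂·v = 1`. -/
def AlgCoprime (w v : ℂ) : Prop :=
  ∃ u₁ u₂ : ℂ, IsIntegral ℤ u₁ ∧ IsIntegral ℤ u₂ ∧ u₁ * w + u₂ * v = 1

/-- `c_a = 2·cos(aπ/n)` if `n/gcd(a,n)` is not a power of `2`, and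
`c_a = 2^{1−2^{1−j}}·cos(aπ/n)` if `n/gcd(a,n) = 2^j`. -/
noncomputable def ca (n a : ℕ) : ℝ :=
  if h : ∃ j : ℕ, n / Nat.gcd a n = 2 ^ j then
    (2 : ℝ) ^ ((1 : ℝ) - (2 : ℝ) ^ ((1 : ℝ) - (h.choose : ℝ))) * Real.cos (a * Real.pi / n)
  else 2 * Real.cos (a * Real.pi / n)

/-- `s_a`, defined as `c_a` but with `cos` replaced by `sin` and the power-of-two
condition taken on `n/gcd(n/2 − a, n)`. -/
noncomputable def sa (n a : ℕ) : ℝ :=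
  if h : ∃ j : ℕ, n / Nat.gcd (n / 2 - a) n = 2 ^ j then
    (2 : ℝ) ^ ((1 : ℝ) - (2 : ℝ) ^ ((1 : ℝ) - (h.choose : ℝ))) * Real.sin (a * Real.pi / n)
  else 2 * Real.sin (a * Real.pi / n)

section Aux

open Real Finset

/-- a complex number with `z ^ m = 1` is an algebraic integer. -/
lemma aux_int_of_pow_eq_one (z : ℂ) (m : ℕ) (hm : 0 < m) (h : z ^ m = 1) : IsIntegral ℤ z := by
  refine ⟨Polynomial.X ^ m - Polynomial.C 1, ?_, ?_⟩
  · simpa using Polynomial.monic_X_pow_sub_C (1 : ℤ) (by omega)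
  · simp [h]

lemma aux_int_intCast (m : ℤ) : IsIntegral ℤ (m : ℂ) := by
  refine ⟨Polynomial.X - Polynomial.C m, Polynomial.monic_X_sub_C m, by simp⟩

lemma aux_prod_integral {ι : Type*} (s : Finset ι) (f : ι → ℂ)
    (h : ∀ i ∈ s, IsIntegral ℤ (f i)) : IsIntegral ℤ (∏ i ∈ s, f i) := by
  classical
  induction s using Finset.induction with
  | empty => simpa using isIntegral_one
  | @insert x t hx ih =>
    rw [Finset.prod_insert hx]
    exact (h _ (Finset.mem_insert_self _ _)).mul
      (ih fun i hi => h i (Finset.mem_insert_of_mem hi))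

/-- The real number `β j = 2^{2^{1-j}}`. -/
noncomputable def betaR (j : ℕ) : ℝ := (2 : ℝ) ^ ((2 : ℝ) ^ ((1 : ℝ) - (j : ℝ)))

lemma betaR_pos (j : ℕ) : 0 < betaR j := Real.rpow_pos_of_pos two_pos _

lemma betaR_sq (j : ℕ) : betaR (j + 1) ^ 2 = betaR j := by
  unfold betaR
  rw [sq, ← Real.rpow_add two_pos]
  congr 1
  push_cast
  have h1 : (1 : ℝ) - ((j : ℝ) + 1) = -(j:ℝ) := by ring
  have h2 : (1 : ℝ) - (j : ℝ) = 1 + -(j:ℝ) := by ring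
  rw [h1, h2, Real.rpow_add two_pos, Real.rpow_one]
  ring

lemma betaR_pow (j : ℕ) (hj : 1 ≤ j) : betaR j ^ (2 ^ (j - 1)) = 2 := by
  induction j, hj using Nat.le_induction with
  | base =>
    simp only [betaR]
    norm_num
  | succ j hj ih =>
    have h1 : (j + 1) - 1 = (j - 1) + 1 := by omega
    rw [h1, pow_succ, mul_comm (2 ^ (j-1)) 2, pow_mul, betaR_sq, ih]

lemma aux_alpha_eq (k : ℕ) : alphaC k = Complex.ofReal (betaR k) := rfl

lemma aux_alpha_pow (k : ℕ) (hk : 1 ≤ k) : alphaC k ^ (2 ^ (k - 1)) = 2 := by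
  rw [aux_alpha_eq, ← Complex.ofReal_pow, betaR_pow k hk]
  norm_num

lemma aux_alpha_integral (k : ℕ) (hk : 1 ≤ k) : IsIntegral ℤ (alphaC k) := by
  refine IsIntegral.of_pow (n := 2 ^ (k - 1)) (by positivity) ?_
  rw [aux_alpha_pow k hk]
  simpa using aux_int_intCast 2

/-- normalized cosine `U b j = β_j⁻¹ · 2 cos(bπ/2^j)`. -/
noncomputable def UU (b : ℤ) (j : ℕ) : ℝ :=
  (betaR j)⁻¹ * (2 * Real.cos (b * Real.pi / 2 ^ j))

/-- normalized sine. -/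
noncomputable def SS (b : ℤ) (j : ℕ) : ℝ :=
  (betaR j)⁻¹ * (2 * Real.sin (b * Real.pi / 2 ^ j))

lemma aux_cos_odd (b : ℤ) (hb : Odd b) : Real.cos (b * Real.pi / 2) = 0 := by
  obtain ⟨m, rfl⟩ := hb
  rw [Real.cos_eq_zero_iff]
  exact ⟨m, by push_cast; ring⟩

lemma aux_angle (b : ℤ) (j : ℕ) :
    (b : ℝ) * Real.pi / 2 ^ j = 2 * ((b : ℝ) * Real.pi / 2 ^ (j + 1)) := by
  rw [pow_succ]
  have : (2:ℝ) ^ j ≠ 0 := by positivity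
  field_simp

lemma UU_sq (b : ℤ) (j : ℕ) :
    UU b (j + 1) ^ 2 = 2 / betaR j + UU b j := by
  unfold UU
  have hb1 := betaR_pos (j + 1)
  have hb0 := betaR_pos j
  have hcos : (2 * Real.cos ((b:ℝ) * Real.pi / 2 ^ (j+1))) ^ 2
      = 2 + 2 * Real.cos ((b:ℝ) * Real.pi / 2 ^ j) := by
    rw [aux_angle b j, mul_pow, Real.cos_sq]
    ring
  have hβ : (betaR (j+1))⁻¹ ^ 2 = (betaR j)⁻¹ := by
    rw [inv_pow, betaR_sq]
  rw [mul_pow, hβ, hcos]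
  field_simp

lemma SS_mul (b : ℤ) (j : ℕ) : SS b (j + 1) * UU b (j + 1) = SS b j := by
  unfold SS UU
  have hβ : (betaR (j+1))⁻¹ * (betaR (j+1))⁻¹ = (betaR j)⁻¹ := by
    rw [← sq, inv_pow, betaR_sq]
  have hsin : (2 * Real.sin ((b:ℝ) * Real.pi / 2 ^ (j+1)))
      * (2 * Real.cos ((b:ℝ) * Real.pi / 2 ^ (j+1)))
      = 2 * Real.sin ((b:ℝ) * Real.pi / 2 ^ j) := by
    rw [aux_angle b j, Real.sin_two_mul]
    ring
  calc (betaR (j+1))⁻¹ * (2 * Real.sin ((b:ℝ) * Real.pi / 2 ^ (j+1)))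
      * ((betaR (j+1))⁻¹ * (2 * Real.cos ((b:ℝ) * Real.pi / 2 ^ (j+1))))
      = ((betaR (j+1))⁻¹ * (betaR (j+1))⁻¹) *
        ((2 * Real.sin ((b:ℝ) * Real.pi / 2 ^ (j+1)))
          * (2 * Real.cos ((b:ℝ) * Real.pi / 2 ^ (j+1)))) := by ring
    _ = (betaR j)⁻¹ * (2 * Real.sin ((b:ℝ) * Real.pi / 2 ^ j)) := by rw [hβ, hsin]

lemma SS_eq_UU (b : ℤ) (j : ℕ) : SS b (j + 1) = UU (2 ^ j - b) (j + 1) := by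
  unfold SS UU
  congr 1
  have h2 : (2:ℝ) ^ (j+1) ≠ 0 := by positivity
  have hangle : ((2 ^ j - b : ℤ) : ℝ) * Real.pi / 2 ^ (j+1)
      = Real.pi / 2 - (b : ℝ) * Real.pi / 2 ^ (j+1) := by
    push_cast
    rw [pow_succ]
    have : (2:ℝ) ^ j ≠ 0 := by positivity
    field_simp
  rw [hangle, Real.cos_pi_div_two_sub]

lemma SS_one (b : ℤ) : SS b 1 = Real.sin (b * Real.pi / 2) := by
  unfold SS betaR
  norm_num
  ring

lemma SS_one_sq (b : ℤ) (hb : Odd b) : SS b 1 ^ 2 = 1 := by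
  rw [SS_one]
  have h := Real.sin_sq_add_cos_sq ((b:ℝ) * Real.pi / 2)
  rw [aux_cos_odd b hb] at h
  nlinarith [h]

lemma UU_integral : ∀ j : ℕ, 1 ≤ j → ∀ b : ℤ, Odd b → IsIntegral ℤ ((UU b j : ℝ) : ℂ) := by
  intro j hj
  induction j, hj using Nat.le_induction with
  | base =>
    intro b hb
    have : UU b 1 = 0 := by
      unfold UU
      have h1 : ((b:ℝ) * Real.pi / 2 ^ 1) = (b:ℝ) * Real.pi / 2 := by norm_num
      rw [h1, aux_cos_odd b hb]
      ring
    rw [this]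
    simpa using isIntegral_zero
  | succ j hj ih =>
    intro b hb
    have hA : IsIntegral ℤ ((2 / betaR j : ℝ) : ℂ) := by
      refine IsIntegral.of_pow (n := 2 ^ (j - 1)) (by positivity) ?_
      have : ((2 / betaR j : ℝ)) ^ (2 ^ (j-1)) = ((2 ^ (2 ^ (j-1) - 1) : ℤ) : ℝ) := by
        rw [div_pow, betaR_pow j hj]
        push_cast
        have h1 : (2:ℝ) ^ (2 ^ (j-1)) = 2 ^ (2 ^ (j-1) - 1) * 2 := by
          rw [← pow_succ]
          congr 1
          have : 1 ≤ 2 ^ (j-1) := Nat.one_le_two_pow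
          omega
        rw [h1]
        field_simp
      rw [← Complex.ofReal_pow, this, Complex.ofReal_intCast]
      exact aux_int_intCast _
    refine IsIntegral.of_pow (n := 2) (by norm_num) ?_
    have : (((UU b (j+1) : ℝ)) : ℂ) ^ 2 = ((2 / betaR j : ℝ) : ℂ) + ((UU b j : ℝ) : ℂ) := by
      rw [← Complex.ofReal_pow, UU_sq, Complex.ofReal_add]
    rw [this]
    exact hA.add (ih b hb)

lemma aux_telescope (b : ℤ) : ∀ j : ℕ, 1 ≤ j →
    SS b j * ∏ i ∈ Finset.Icc 2 j, UU b i = SS b 1 := by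
  intro j hj
  induction j, hj using Nat.le_induction with
  | base => simp
  | succ j hj ih =>
    have hIcc : Finset.Icc 2 (j + 1) = Finset.Ico 2 (j + 2) := by
      exact (Finset.Ico_add_one_right_eq_Icc (a := 2) (b := j + 1)).symm
    have hIcc' : Finset.Icc 2 j = Finset.Ico 2 (j + 1) := by
      rw [Finset.Ico_add_one_right_eq_Icc]
    rw [hIcc, Finset.prod_Ico_succ_top (by omega), ← hIcc']
    calc SS b (j+1) * ((∏ i ∈ Finset.Icc 2 j, UU b i) * UU b (j+1))
        = (SS b (j+1) * UU b (j+1)) * ∏ i ∈ Finset.Icc 2 j, UU b i := by ring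
      _ = SS b j * ∏ i ∈ Finset.Icc 2 j, UU b i := by rw [SS_mul]
      _ = SS b 1 := ih

lemma UU_inverse (i : ℕ) (b : ℤ) (hb : Odd b) :
    ∃ w : ℂ, IsIntegral ℤ w ∧ w * ((UU b (i + 2) : ℝ) : ℂ) = 1 := by
  refine ⟨Complex.ofReal (SS b 1 * SS b (i+2) * ∏ l ∈ Finset.Icc 2 (i+1), UU b l), ?_, ?_⟩
  · -- integrality
    rw [Complex.ofReal_mul, Complex.ofReal_mul]
    have h1 : IsIntegral ℤ ((SS b 1 : ℝ) : ℂ) := by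
      have := SS_one_sq b hb
      rcases sq_eq_one_iff.mp this with h | h <;> rw [h]
      · simpa using isIntegral_one
      · simpa using isIntegral_one.neg
    have h2 : IsIntegral ℤ ((SS b (i+2) : ℝ) : ℂ) := by
      rw [SS_eq_UU]
      refine UU_integral (i+2) (by omega) _ ?_
      refine Even.sub_odd ?_ hb
      exact ⟨2 ^ i, by rw [pow_succ]; ring⟩
    have h3 : IsIntegral ℤ ((∏ l ∈ Finset.Icc 2 (i+1), UU b l : ℝ) : ℂ) := by
      rw [Complex.ofReal_prod]
      refine aux_prod_integral _ _ fun l hl => ?_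
      exact UU_integral l (by simp at hl; omega) b hb
    exact (h1.mul h2).mul h3
  · -- product is 1
    rw [← Complex.ofReal_one, ← Complex.ofReal_mul]
    congr 1
    have hIcc : Finset.Icc 2 (i + 2) = Finset.Ico 2 (i + 3) := by exact (Finset.Ico_add_one_right_eq_Icc (a := 2) (b := i + 2)).symm
    have hIcc' : Finset.Icc 2 (i+1) = Finset.Ico 2 (i + 2) := by exact (Finset.Ico_add_one_right_eq_Icc (a := 2) (b := i + 1)).symm
    have htel := aux_telescope b (i + 2) (by omega)
    rw [hIcc, Finset.prod_Ico_succ_top (by omega), ← hIcc'] at htel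
    have hS1 := SS_one_sq b hb
    calc SS b 1 * SS b (i+2) * (∏ l ∈ Finset.Icc 2 (i+1), UU b l) * UU b (i+2)
        = SS b 1 * (SS b (i+2) * ((∏ l ∈ Finset.Icc 2 (i+1), UU b l) * UU b (i+2))) := by
          ring
      _ = SS b 1 * SS b 1 := by rw [htel]
      _ = 1 := by nlinarith [hS1]

end Aux

lemma ca_eq_of_pow (n a J : ℕ) (hJ : n / Nat.gcd a n = 2 ^ J) :
    ca n a = (2:ℝ) ^ ((1:ℝ) - (2:ℝ) ^ ((1:ℝ) - (J:ℝ))) * Real.cos (a * Real.pi / n) := by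
  have h : ∃ j : ℕ, n / Nat.gcd a n = 2 ^ j := ⟨J, hJ⟩
  unfold ca
  rw [dif_pos h]
  have hc : h.choose = J :=
    Nat.pow_right_injective (le_refl 2) (h.choose_spec.symm.trans hJ)
  rw [hc]

lemma ca_eq_of_not_pow (n a : ℕ) (h : ¬ ∃ j : ℕ, n / Nat.gcd a n = 2 ^ j) :
    ca n a = 2 * Real.cos (a * Real.pi / n) := by
  unfold ca
  rw [dif_neg h]

lemma scalar_eq (J : ℕ) :
    (2:ℝ) ^ ((1:ℝ) - (2:ℝ) ^ ((1:ℝ) - (J:ℝ))) = 2 / betaR J := by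
  unfold betaR
  rw [Real.rpow_sub two_pos, Real.rpow_one]

lemma ca_main (n k s : ℕ) (hk : 1 ≤ k) (hs : Odd s) (hn : n = 2 ^ k * s)
    (a : ℕ) (ha1 : 1 ≤ a) (ha2 : a < n / 2) :
    IsIntegral ℤ ((ca n a : ℝ) : ℂ) ∧ AlgCoprime ((ca n a : ℝ) : ℂ) (alphaC k) := by
  have hs1 : 1 ≤ s := hs.pos
  have h2k : 2 ≤ 2 ^ k := by
    calc 2 = 2 ^ 1 := (pow_one 2).symm
    _ ≤ 2 ^ k := Nat.pow_le_pow_right (by norm_num) hk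
  have hn2 : 2 ≤ n := by
    have : 2 ^ k * 1 ≤ 2 ^ k * s := Nat.mul_le_mul_left _ hs1
    omega
  have hn0 : 0 < n := by omega
  have hg0 : 0 < Nat.gcd a n := Nat.gcd_pos_of_pos_right a hn0
  have hgdvd : Nat.gcd a n ∣ n := Nat.gcd_dvd_right a n
  have hgd : Nat.gcd a n * (n / Nat.gcd a n) = n := Nat.mul_div_cancel' hgdvd
  have hgady : Nat.gcd a n ∣ a := Nat.gcd_dvd_left a n
  have hgb : Nat.gcd a n * (a / Nat.gcd a n) = a := Nat.mul_div_cancel' hgady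
  have hd0 : 0 < n / Nat.gcd a n := by
    rcases Nat.eq_zero_or_pos (n / Nat.gcd a n) with h | h
    · rw [h, mul_zero] at hgd; omega
    · exact h
  have hb0 : 0 < a / Nat.gcd a n := by
    rcases Nat.eq_zero_or_pos (a / Nat.gcd a n) with h | h
    · rw [h, mul_zero] at hgb; omega
    · exact h
  have hbd : Nat.Coprime (a / Nat.gcd a n) (n / Nat.gcd a n) :=
    Nat.coprime_div_gcd_div_gcd hg0
  have hd1 : n / Nat.gcd a n ≠ 1 := by
    intro h
    rw [h, mul_one] at hgd
    have : n ≤ a := hgd ▸ Nat.le_of_dvd (by omega) hgady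
    omega
  have hd2 : n / Nat.gcd a n ≠ 2 := by
    intro h
    rw [h] at hgd
    have : Nat.gcd a n ≤ a := Nat.le_of_dvd (by omega) hgady
    omega
  have hang : (a:ℝ) * Real.pi / n
      = ((a / Nat.gcd a n : ℕ):ℝ) * Real.pi / ((n / Nat.gcd a n : ℕ):ℝ) := by
    have hgR : ((Nat.gcd a n : ℕ):ℝ) ≠ 0 := by
      exact_mod_cast Nat.pos_iff_ne_zero.mp hg0
    have hnR : ((n:ℕ):ℝ) ≠ 0 := by exact_mod_cast Nat.pos_iff_ne_zero.mp hn0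
    have hdR : ((n / Nat.gcd a n : ℕ):ℝ) ≠ 0 := by
      exact_mod_cast Nat.pos_iff_ne_zero.mp hd0
    have key : (a:ℝ) * ((n / Nat.gcd a n : ℕ):ℝ) = ((a / Nat.gcd a n : ℕ):ℝ) * n := by
      have hnat : a * (n / Nat.gcd a n) = (a / Nat.gcd a n) * n := by
        calc a * (n / Nat.gcd a n)
            = (Nat.gcd a n * (a / Nat.gcd a n)) * (n / Nat.gcd a n) := by rw [hgb]
          _ = (a / Nat.gcd a n) * (Nat.gcd a n * (n / Nat.gcd a n)) := by ring
          _ = (a / Nat.gcd a n) * n := by rw [hgd]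
      exact_mod_cast hnat
    rw [div_eq_div_iff (by positivity) (by positivity)]
    nlinarith [key, Real.pi_pos]
  by_cases hx : ∃ j : ℕ, n / Nat.gcd a n = 2 ^ j
  · obtain ⟨J, hJ⟩ := hx
    have hJ2 : 2 ≤ J := by
      rcases Nat.lt_or_ge J 2 with h | h
      · interval_cases J <;> simp_all
      · exact h
    have hbodd : Odd (a / Nat.gcd a n) := by
      have hco : Nat.Coprime (a / Nat.gcd a n) 2 := by
        refine Nat.Coprime.coprime_dvd_right ?_ hbd
        rw [hJ]
        exact dvd_pow_self 2 (by omega)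
      rcases Nat.even_or_odd (a / Nat.gcd a n) with h | h
      · exfalso
        have h2 : 2 ∣ Nat.gcd (a / Nat.gcd a n) 2 := Nat.dvd_gcd h.two_dvd dvd_rfl
        have hco' : Nat.gcd (a / Nat.gcd a n) 2 = 1 := hco
        omega
      · exact h
    have hca : ca n a = UU ((a / Nat.gcd a n : ℕ) : ℤ) J := by
      rw [ca_eq_of_pow n a J hJ, scalar_eq]
      unfold UU
      rw [hang, hJ]
      have hcast : (((a / Nat.gcd a n : ℕ) : ℤ) : ℝ) = ((a / Nat.gcd a n : ℕ) : ℝ) :=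
        Int.cast_natCast _
      rw [hcast]
      push_cast
      ring
    have hZodd : Odd ((a / Nat.gcd a n : ℕ) : ℤ) := (Int.odd_coe_nat _).mpr hbodd
    constructor
    · rw [hca]
      exact UU_integral J (by omega) _ hZodd
    · obtain ⟨i, rfl⟩ : ∃ i, J = i + 2 := ⟨J - 2, by omega⟩
      obtain ⟨w, hw, hw1⟩ := UU_inverse i _ hZodd
      refine ⟨w, 0, hw, isIntegral_zero, ?_⟩
      rw [hca, zero_mul, add_zero]
      exact hw1
  · -- d is not a power of 2
    have hca := ca_eq_of_not_pow n a hx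
    set D := n / Nat.gcd a n with hD
    set B := a / Nat.gcd a n with hB
    have hd3 : 3 ≤ D := by omega
    have hζ : IsPrimitiveRoot (Complex.exp (2 * Real.pi * Complex.I / D)) D :=
      Complex.isPrimitiveRoot_exp D (by omega)
    have hη : IsPrimitiveRoot (Complex.exp (2 * Real.pi * Complex.I / D) ^ B) D :=
      hζ.pow_of_coprime B hbd
    set η := Complex.exp (2 * (Real.pi:ℂ) * Complex.I / D) ^ B with hηdef
    set E := Complex.exp (((a:ℝ) * Real.pi / n : ℝ) * Complex.I) with hEdef
    set F := Complex.exp (-(((a:ℝ) * Real.pi / n : ℝ) : ℂ) * Complex.I) with hFdef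
    have hEF : E * F = 1 := by
      rw [hEdef, hFdef, ← Complex.exp_add]
      simp
    have hcosEF : ((2 * Real.cos ((a:ℝ) * Real.pi / n) : ℝ) : ℂ) = E + F := by
      rw [Complex.ofReal_mul, Complex.ofReal_cos]
      rw [show Complex.cos ((((a:ℝ) * Real.pi / n : ℝ)) : ℂ)
        = (Complex.exp ((((a:ℝ) * Real.pi / n : ℝ) : ℂ) * Complex.I)
          + Complex.exp (-(((a:ℝ) * Real.pi / n : ℝ) : ℂ) * Complex.I)) / 2 from rfl]
      rw [hEdef, hFdef]
      push_cast
      ring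
    have hDC : ((D:ℕ):ℂ) ≠ 0 := by
      exact_mod_cast (by omega : (D:ℕ) ≠ 0)
    have hE2 : E ^ 2 = η := by
      rw [hEdef, hηdef]
      conv_rhs => rw [← Complex.exp_nat_mul]
      rw [sq, ← Complex.exp_add]
      congr 1
      have hθ : ((a:ℝ) * Real.pi / n) = (B:ℝ) * Real.pi / (D:ℝ) := hang
      rw [hθ]
      push_cast
      field_simp
      ring
    have hEn : E ^ (2 * n) = 1 := by
      rw [hEdef, ← Complex.exp_nat_mul]
      have harg : ((2 * n : ℕ):ℂ) * ((((a:ℝ) * Real.pi / n : ℝ)) : ℂ) * Complex.I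
          = (a:ℕ) * (2 * (Real.pi:ℂ) * Complex.I) := by
        have hnC : ((n:ℕ):ℂ) ≠ 0 := by exact_mod_cast (by omega : (n:ℕ) ≠ 0)
        push_cast
        field_simp
      rw [show ((2 * n : ℕ):ℂ) * (((((a:ℝ) * Real.pi / n : ℝ)) : ℂ) * Complex.I)
          = ((2 * n : ℕ):ℂ) * ((((a:ℝ) * Real.pi / n : ℝ)) : ℂ) * Complex.I from by ring,
        harg]
      exact Complex.exp_nat_mul_two_pi_mul_I a
    have hFn : F ^ (2 * n) = 1 := by
      rw [hFdef, ← Complex.exp_nat_mul]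
      have harg : ((2 * n : ℕ):ℂ) * (-((((a:ℝ) * Real.pi / n : ℝ)) : ℂ) * Complex.I)
          = ((-(a:ℤ) : ℤ):ℂ) * (2 * (Real.pi:ℂ) * Complex.I) := by
        have hnC : ((n:ℕ):ℂ) ≠ 0 := by exact_mod_cast (by omega : (n:ℕ) ≠ 0)
        push_cast
        field_simp
      rw [harg]
      exact Complex.exp_int_mul_two_pi_mul_I (-(a:ℤ))
    have hEint := aux_int_of_pow_eq_one E (2*n) (by omega) hEn
    have hFint := aux_int_of_pow_eq_one F (2*n) (by omega) hFn
    -- parity of cyclotomic evaluation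
    have heval1 : ¬ ((2:ℤ) ∣ Polynomial.eval 1 (Polynomial.cyclotomic D ℤ)) := by
      by_cases hpp : IsPrimePow D
      · obtain ⟨p, r, hp, hr, hpr⟩ := hpp
        have hpnat : p.Prime := Nat.prime_iff.mpr hp
        have hp2 : p ≠ 2 := by
          rintro rfl
          exact hx ⟨r, hpr.symm⟩
        haveI : Fact p.Prime := ⟨hpnat⟩
        obtain ⟨r', rfl⟩ : ∃ r', r = r' + 1 := ⟨r - 1, by omega⟩
        rw [← hpr, Polynomial.eval_one_cyclotomic_prime_pow]
        intro hdvd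
        have h2p : (2:ℕ) ∣ p := by exact_mod_cast hdvd
        rcases (Nat.Prime.eq_one_or_self_of_dvd hpnat 2 h2p) with h | h
        · norm_num at h
        · exact hp2 h.symm
      · rw [Polynomial.eval_one_cyclotomic_not_prime_pow ?_]
        · norm_num
        · intro p hp r hpr
          rcases Nat.eq_zero_or_pos r with hr0 | hr0
          · subst hr0; simp at hpr; omega
          · exact hpp ⟨p, r, Nat.prime_iff.mp hp, hr0, hpr⟩
    set m := Polynomial.eval (-1 : ℤ) (Polynomial.cyclotomic D ℤ) with hm
    have hodd : Odd m := by
      rcases Int.even_or_odd m with hev | hod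
      swap
      · exact hod
      exfalso
      obtain ⟨c, hc⟩ := hev
      have hdvd : (2:ℤ) ∣ m := ⟨c, by omega⟩
      have hz : ((m:ℤ) : ZMod 2) = 0 := (ZMod.intCast_zmod_eq_zero_iff_dvd m 2).2 (by exact_mod_cast hdvd)
      have e1 : Polynomial.eval (((-1:ℤ) : ZMod 2)) ((Polynomial.cyclotomic D ℤ).map (Int.castRingHom (ZMod 2)))
          = ((m : ℤ) : ZMod 2) := by
        rw [hm]
        exact Polynomial.eval_intCast_map (Int.castRingHom (ZMod 2)) _ (-1)
      have e2 : Polynomial.eval (((1:ℤ) : ZMod 2)) ((Polynomial.cyclotomic D ℤ).map (Int.castRingHom (ZMod 2)))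
          = ((Polynomial.eval 1 (Polynomial.cyclotomic D ℤ) : ℤ) : ZMod 2) := by
        have := Polynomial.eval_intCast_map (Int.castRingHom (ZMod 2)) (Polynomial.cyclotomic D ℤ) 1
        simpa using this
      have e3 : (((-1:ℤ)) : ZMod 2) = (((1:ℤ)) : ZMod 2) := by decide
      have : ((Polynomial.eval 1 (Polynomial.cyclotomic D ℤ) : ℤ) : ZMod 2) = 0 := by
        rw [← e2, ← e3, e1, hz]
      exact heval1 ((ZMod.intCast_zmod_eq_zero_iff_dvd _ 2).1 this)
    have hprod : ((m : ℤ) : ℂ) = ∏ μ ∈ primitiveRoots D ℂ, (-1 - μ) := by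
      have h1 : Polynomial.cyclotomic D ℂ
          = ∏ μ ∈ primitiveRoots D ℂ, (Polynomial.X - Polynomial.C μ) :=
        Polynomial.cyclotomic_eq_prod_X_sub_primitiveRoots hη
      have h2 : ((m:ℤ):ℂ) = Polynomial.eval (-1 : ℂ) (Polynomial.cyclotomic D ℂ) := by
        rw [← Polynomial.map_cyclotomic D (Int.castRingHom ℂ), hm]
        have := Polynomial.eval_intCast_map (Int.castRingHom ℂ) (Polynomial.cyclotomic D ℤ) (-1)
        simpa using this.symm
      rw [h2, h1, Polynomial.eval_prod]
      simp [sub_eq_add_neg]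
    have hmem : η ∈ primitiveRoots D ℂ := (mem_primitiveRoots (by omega)).2 hη
    set R := ∏ μ ∈ (primitiveRoots D ℂ).erase η, (-1 - μ) with hR
    have hsplit : ((m:ℤ):ℂ) = (-1 - η) * R := by
      rw [hprod, ← Finset.mul_prod_erase _ _ hmem]
    have hRint : IsIntegral ℤ R := by
      refine aux_prod_integral _ _ fun μ hμ => ?_
      have hμ' : IsPrimitiveRoot μ D :=
        isPrimitiveRoot_of_mem_primitiveRoots (Finset.mem_of_mem_erase hμ)
      exact (isIntegral_one.neg).sub (aux_int_of_pow_eq_one μ D (by omega) hμ'.pow_eq_one)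
    have hkey : (-(E * R)) * ((2 * Real.cos ((a:ℝ) * Real.pi / n) : ℝ):ℂ) = ((m:ℤ):ℂ) := by
      rw [hcosEF, hsplit]
      have hEEF : E * (E + F) = η + 1 := by
        calc E * (E + F) = E ^ 2 + E * F := by ring
        _ = η + 1 := by rw [hE2, hEF]
      calc (-(E * R)) * (E + F) = -(R * (E * (E + F))) := by ring
        _ = -(R * (η + 1)) := by rw [hEEF]
        _ = (-1 - η) * R := by ring
    obtain ⟨t, ht⟩ := hodd
    constructor
    · rw [hca, hcosEF]
      exact hEint.add hFint
    · refine ⟨-(E * R), (alphaC k ^ (2 ^ (k-1) - 1)) * (-(t:ℂ)), ?_, ?_, ?_⟩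
      · exact (hEint.mul hRint).neg
      · refine ((aux_alpha_integral k hk).pow _).mul ?_
        simpa using aux_int_intCast (-t)
      · rw [hca]
        have hα : alphaC k ^ (2 ^ (k-1) - 1) * alphaC k = 2 := by
          rw [← pow_succ, show (2 ^ (k-1) - 1 + 1) = 2 ^ (k-1) from by
            have : 1 ≤ 2 ^ (k-1) := Nat.one_le_two_pow
            omega]
          exact aux_alpha_pow k hk
        calc -(E * R) * ((2 * Real.cos ((a:ℝ) * Real.pi / n) : ℝ):ℂ)
              + (alphaC k ^ (2 ^ (k-1) - 1)) * (-(t:ℂ)) * alphaC k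
            = ((m:ℤ):ℂ) + (-(t:ℂ)) * (alphaC k ^ (2 ^ (k-1) - 1) * alphaC k) := by
              rw [hkey]; ring
          _ = ((m:ℤ):ℂ) + (-(t:ℂ)) * 2 := by rw [hα]
          _ = 1 := by rw [ht]; push_cast; ring

lemma sa_eq_ca (n a : ℕ) (hdiv : 2 ∣ n) (hn0 : 0 < n) (ha : a ≤ n / 2) :
    sa n a = ca n (n / 2 - a) := by
  have hsc : Real.sin ((a:ℝ) * Real.pi / n)
      = Real.cos (((n / 2 - a : ℕ):ℝ) * Real.pi / n) := by
    obtain ⟨q, rfl⟩ := hdiv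
    have hq : (2 * q) / 2 = q := by omega
    rw [hq] at ha ⊢
    have haq : a ≤ q := ha
    have hcast : ((q - a : ℕ):ℝ) = (q:ℝ) - a := by
      rw [Nat.cast_sub haq]
    rw [hcast]
    have hq0 : 0 < q := by omega
    have harg : ((q:ℝ) - a) * Real.pi / ((2 * q : ℕ):ℝ)
        = Real.pi / 2 - (a:ℝ) * Real.pi / ((2 * q : ℕ):ℝ) := by
      have : ((q:ℝ)) ≠ 0 := by positivity
      push_cast
      field_simp
    rw [harg, Real.cos_pi_div_two_sub]
  unfold sa ca
  by_cases h : ∃ j : ℕ, n / Nat.gcd (n / 2 - a) n = 2 ^ j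
  · rw [dif_pos h, dif_pos h, hsc]
  · rw [dif_neg h, dif_neg h, hsc]


/-- For `n = 2^k·s` (`s` odd) and `1 ≤ a < n/2`, both `c_a` and `s_a` are algebraic
integers coprime to `α = 2^{2^{1−k}}`; moreover `s_a = c_{n/2−a}`. -/
theorem stmt12 (n k s : ℕ) (hk : 1 ≤ k) (hs : Odd s) (hn : n = 2 ^ k * s)
    (a : ℕ) (ha1 : 1 ≤ a) (ha2 : a < n / 2) :
    IsIntegral ℤ ((ca n a : ℝ) : ℂ) ∧ AlgCoprime ((ca n a : ℝ) : ℂ) (alphaC k) ∧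
    IsIntegral ℤ ((sa n a : ℝ) : ℂ) ∧ AlgCoprime ((sa n a : ℝ) : ℂ) (alphaC k) ∧
    sa n a = ca n (n / 2 - a) := by
  have hs1 : 1 ≤ s := hs.pos
  have h2k : 2 ≤ 2 ^ k := by
    calc 2 = 2 ^ 1 := (pow_one 2).symm
    _ ≤ 2 ^ k := Nat.pow_le_pow_right (by norm_num) hk
  have hn2 : 2 ≤ n := by
    have : 2 ^ k * 1 ≤ 2 ^ k * s := Nat.mul_le_mul_left _ hs1
    omega
  have hdiv : 2 ∣ n := by
    refine ⟨2 ^ (k - 1) * s, ?_⟩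
    rw [hn, ← mul_assoc]
    congr 1
    rw [← pow_succ']
    congr 1
    omega
  have hmain1 := ca_main n k s hk hs hn a ha1 ha2
  have ha1' : 1 ≤ n / 2 - a := by omega
  have ha2' : n / 2 - a < n / 2 := by omega
  have hmain2 := ca_main n k s hk hs hn (n / 2 - a) ha1' ha2'
  have hse := sa_eq_ca n a hdiv (by omega) (le_of_lt ha2)
  refine ⟨hmain1.1, hmain1.2, ?_, ?_, hse⟩
  · rw [hse]; exact hmain2.1
  · rw [hse]; exact hmain2.2
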